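/- arXiv:1806.00315 — 3 statements merged into one kernel-verified Lean document; each statement's English description precedes it below -/
import Mathlib

section
/- Let L be a first-order language equipped with an L-structure on ℤ such that the order relation {(a,b) ∈ ℤ² : a < b} is definable without parameters. Let U ⊆ ℤ be L-definable with parameters with U ⊆ {x ∈ ℤ : x ≥ 0} and U infinite, and let f : ℤ → ℤ be a function whose graph is L-definable with parameters and with f(x) ≥ 0 for all x ∈ U. Then there exists a set U' ⊆ U, L-definable with parameters, such that U' is infinite and f is nondecreasing on U' (for all x, y ∈ U' with x ≤ y, f(x) ≤ f(y)). -/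
open FirstOrder

theorem definable_monotone_restriction (L : FirstOrder.Language) [L.Structure ℤ]
    (hlt : (∅ : Set ℤ).Definable L {v : Fin 2 → ℤ | v 0 < v 1})
    (U : Set ℤ) (hUdef : (Set.univ : Set ℤ).Definable₁ L U)
    (hUpos : U ⊆ {x : ℤ | 0 ≤ x}) (hUinf : U.Infinite)
    (f : ℤ → ℤ) (hfdef : (Set.univ : Set ℤ).Definable L {v : Fin 2 → ℤ | f (v 0) = v 1})
    (hfpos : ∀ x ∈ U, 0 ≤ f x) :
    ∃ U' : Set ℤ, U' ⊆ U ∧ (Set.univ : Set ℤ).Definable₁ L U' ∧ U'.Infinite ∧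
      ∀ x ∈ U', ∀ y ∈ U', x ≤ y → f x ≤ f y := by
  classical
  set U' : Set ℤ := {x | x ∈ U ∧ ∀ y ∈ U, x ≤ y → f x ≤ f y} with hU'
  have hlt' : (Set.univ : Set ℤ).Definable L {v : Fin 2 → ℤ | v 0 < v 1} :=
    hlt.mono (Set.empty_subset _)
  -- U is unbounded above
  have hUub : ∀ n : ℤ, ∃ x ∈ U, n ≤ x := by
    intro n
    by_contra h
    push_neg at h
    exact hUinf ((Set.finite_Icc 0 n).subset (fun x hx => ⟨hUpos hx, le_of_lt (h x hx)⟩))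
  -- U' is cofinal
  have hU'ub : ∀ n : ℤ, ∃ x ∈ U', n ≤ x := by
    intro n
    set T : Set ℕ := (fun y => (f y).toNat) '' {y | y ∈ U ∧ n ≤ y} with hT
    have hTne : T.Nonempty := by
      obtain ⟨x, hxU, hxn⟩ := hUub n
      exact ⟨(f x).toNat, x, ⟨hxU, hxn⟩, rfl⟩
    obtain ⟨y, ⟨hyU, hyn⟩, hym⟩ := Nat.sInf_mem hTne
    simp only [] at hym
    refine ⟨y, ⟨hyU, fun z hzU hyz => ?_⟩, hyn⟩
    have hz : (f z).toNat ∈ T := ⟨z, ⟨hzU, hyn.trans hyz⟩, rfl⟩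
    have hle : sInf T ≤ (f z).toNat := Nat.sInf_le hz
    rw [← hym] at hle
    have h1 : ((f y).toNat : ℤ) ≤ ((f z).toNat : ℤ) := by exact_mod_cast hle
    rwa [Int.toNat_of_nonneg (hfpos y hyU), Int.toNat_of_nonneg (hfpos z hzU)] at h1
  have hU'inf : U'.Infinite := by
    intro hfin
    obtain ⟨b, hb⟩ := hfin.bddAbove
    obtain ⟨x, hxU', hxb⟩ := hU'ub (b + 1)
    exact absurd (hb hxU') (by omega)
  -- definability
  have hfdef2 : (Set.univ : Set ℤ).Definable L {v : Fin 2 → ℤ | f (v 1) < f (v 0)} := by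
    have c1 : (Set.univ : Set ℤ).Definable L {w : Fin 4 → ℤ | f (w 0) = w 2} := by
      have h := hfdef.preimage_comp (fun i : Fin 2 => if i = 0 then (0 : Fin 4) else 2)
      convert h using 1
      all_goals ext w
      all_goals simp [Set.preimage_setOf_eq, Function.comp]
    have c2 : (Set.univ : Set ℤ).Definable L {w : Fin 4 → ℤ | f (w 1) = w 3} := by
      have h := hfdef.preimage_comp (fun i : Fin 2 => if i = 0 then (1 : Fin 4) else 3)
      convert h using 1
      all_goals ext w
      all_goals simp [Set.preimage_setOf_eq, Function.comp]
    have c3 : (Set.univ : Set ℤ).Definable L {w : Fin 4 → ℤ | w 3 < w 2} := by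
      have h := hlt'.preimage_comp (fun i : Fin 2 => if i = 0 then (3 : Fin 4) else 2)
      convert h using 1
      all_goals ext w
      all_goals simp [Set.preimage_setOf_eq, Function.comp]
    have hC := (c1.inter c2).inter c3
    have hproj := hC.image_comp (fun i : Fin 2 => (⟨i, by omega⟩ : Fin 4))
    convert hproj using 1
    ext v
    simp only [Set.mem_image, Set.mem_inter_iff, Set.mem_setOf_eq]
    constructor
    · intro hv
      refine ⟨![v 0, v 1, f (v 0), f (v 1)], ⟨⟨rfl, rfl⟩, hv⟩, ?_⟩
      ext i
      fin_cases i <;> rfl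
    · rintro ⟨w, ⟨⟨h1, h2⟩, h3⟩, rfl⟩
      simpa [Function.comp, ← h1, ← h2] using h3
  have hU1 : (Set.univ : Set ℤ).Definable L {x : Fin 1 → ℤ | x 0 ∈ U} := hUdef
  have hU2 : (Set.univ : Set ℤ).Definable L {v : Fin 2 → ℤ | v 1 ∈ U} := by
    have h := hU1.preimage_comp (fun _ : Fin 1 => (1 : Fin 2))
    convert h using 1
    all_goals ext v
    all_goals simp [Set.preimage_setOf_eq, Function.comp]
  have hlt2 : (Set.univ : Set ℤ).Definable L {v : Fin 2 → ℤ | v 1 < v 0} := by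
    have h := hlt'.preimage_comp (fun i : Fin 2 => if i = 0 then (1 : Fin 2) else 0)
    convert h using 1
    all_goals ext v
    all_goals simp [Set.preimage_setOf_eq, Function.comp]
  -- bad set
  have hB := (hU2.inter hlt2.compl).inter hfdef2
  have hP := hB.image_comp (fun _ : Fin 1 => (0 : Fin 2))
  have hU'def : (Set.univ : Set ℤ).Definable₁ L U' := by
    show (Set.univ : Set ℤ).Definable L {x : Fin 1 → ℤ | x 0 ∈ U'}
    convert hU1.inter hP.compl using 1
    ext v
    simp only [Set.mem_inter_iff, Set.mem_setOf_eq, Set.mem_compl_iff, Set.mem_image,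
      Set.mem_inter_iff, not_exists, hU']
    constructor
    · rintro ⟨hvU, hmon⟩
      refine ⟨hvU, fun w => ?_⟩
      rintro ⟨⟨⟨hwU, hwlt⟩, hwf⟩, hproj⟩
      have hv0 : w 0 = v 0 := congrFun hproj 0
      have := hmon (w 1) hwU (by rw [← hv0]; omega)
      rw [hv0] at hwf
      omega
    · rintro ⟨hvU, hbad⟩
      refine ⟨hvU, fun y hyU hxy => ?_⟩
      by_contra hlt3
      push_neg at hlt3
      exact hbad ![v 0, y] ⟨⟨⟨hyU, by simp; omega⟩, by simpa using hlt3⟩,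
        by ext i; fin_cases i; rfl⟩
  exact ⟨U', fun x hx => hx.1, hU'def, hU'inf, fun x hx y hy hxy => hx.2 y hy.1 hxy⟩
end

section
/- Let X ⊆ ℕ and suppose there exist functions D : ℕ → ℕ and A : ℕ → ℕ and constants u, v ∈ ℕ such that: D and A are nondecreasing; D(n) ≥ 1, D(n+1) − D(n) ≤ u and A(n+1) − A(n) ≤ v for all n; and for every n, X repeats on [A(n), A(n)+n] with shift D(n). Then there exists d ≥ 1 such that for every n ∈ ℕ there exists a ∈ ℕ such that X repeats on [a, a+n] with shift d. -/
/-!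
If `D` increases infinitely often, its increments take only the values `1, …, u`, so some
increment `d ≥ 1` occurs for infinitely many `M`. For such an `M` the windows at `M` and `M + 1`
overlap on a stretch of length about `M - u - v`, and chaining the two repetitions (shifts `D M`
and `D M + d`) shows that `X` repeats there with shift `d`. Otherwise the monotone `D` is
eventually constant and its final value is itself a shift for arbitrarily long windows.
-/

open Filter

/-- `X` repeats on `[a, a+n]` with shift `g`: for every `i ≤ n`,
`a + i ∈ X ↔ a + g + i ∈ X`. -/
def RepeatsOn (X : Set ℕ) (a g n : ℕ) : Prop :=
  ∀ i ≤ n, (a + i ∈ X ↔ a + g + i ∈ X)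

namespace RepeatsOn

variable {X : Set ℕ} {a b g h m n : ℕ}

theorem mono (hrep : RepeatsOn X a g m) (hnm : n ≤ m) : RepeatsOn X a g n :=
  fun i hi => hrep i (hi.trans hnm)

theorem sub_shift (hg : RepeatsOn X a g m) (hh : RepeatsOn X b h n) (hab : a ≤ b) (hgh : g ≤ h)
    (hm : b - a + (h - g) + n ≤ m) : RepeatsOn X b (h - g) n := by
  intro i hi
  have hchain := hg (b - a + (h - g) + i) (by omega)
  have hleft : a + (b - a + (h - g) + i) = b + (h - g) + i := by omega
  have hright : a + g + (b - a + (h - g) + i) = b + h + i := by omega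
  rw [hleft, hright] at hchain
  exact (hh i hi).trans hchain.symm

end RepeatsOn

theorem Filter.Frequently.exists_frequently_eq_of_le {α : Type*} {l : Filter α} {δ : α → ℕ}
    {u : ℕ} (hpos : ∃ᶠ x in l, 0 < δ x) (hδ : ∀ x, δ x ≤ u) :
    ∃ d, 1 ≤ d ∧ ∃ᶠ x in l, δ x = d := by
  have hval : ∃ᶠ x in l, ∃ d ∈ Finset.Icc 1 u, δ x = d :=
    hpos.mono fun x hx => ⟨δ x, Finset.mem_Icc.2 ⟨hx, hδ x⟩, rfl⟩
  obtain ⟨d, hd, hfreq⟩ := (Finset.frequently_exists _).1 hval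
  exact ⟨d, (Finset.mem_Icc.1 hd).1, hfreq⟩

theorem Monotone.exists_forall_ge_eq_of_not_frequently_lt {D : ℕ → ℕ} (hD : Monotone D)
    (hinc : ¬∃ᶠ M in atTop, D M < D (M + 1)) : ∃ N, ∀ M ≥ N, D M = D N := by
  obtain ⟨N, hN⟩ := eventually_atTop.1 (not_frequently.1 hinc)
  have hanti : AntitoneOn D (Set.Ici N) :=
    antitoneOn_nat_Ici_of_succ_le fun M hM => not_lt.1 (hN M hM)
  exact ⟨N, fun M hM => le_antisymm (hanti Set.self_mem_Ici hM hM) (hD hM)⟩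

theorem constant_shift_from_bounded_increments (X : Set ℕ) (D A : ℕ → ℕ) (u v : ℕ)
    (hDmono : Monotone D) (hAmono : Monotone A)
    (hD1 : ∀ n : ℕ, 1 ≤ D n)
    (hDu : ∀ n : ℕ, D (n + 1) - D n ≤ u)
    (hAv : ∀ n : ℕ, A (n + 1) - A n ≤ v)
    (hrep : ∀ n : ℕ, RepeatsOn X (A n) (D n) n) :
    ∃ d : ℕ, 1 ≤ d ∧ ∀ n : ℕ, ∃ a : ℕ, RepeatsOn X a d n := by
  by_cases hinc : ∃ᶠ M in atTop, D M < D (M + 1)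
  · obtain ⟨d, hd, hfreq⟩ :=
      (hinc.mono fun M hM => Nat.sub_pos_of_lt hM).exists_frequently_eq_of_le hDu
    refine ⟨d, hd, fun n => ?_⟩
    obtain ⟨M, hMd, hMlarge⟩ := (hfreq.and_eventually (eventually_ge_atTop (n + u + v))).exists
    refine ⟨A (M + 1), ?_⟩
    rw [← hMd]
    exact (hrep M).sub_shift ((hrep (M + 1)).mono (by omega)) (hAmono M.le_succ)
      (hDmono M.le_succ) (by have := hAv M; have := hDu M; omega)
  · obtain ⟨N, hN⟩ := hDmono.exists_forall_ge_eq_of_not_frequently_lt hinc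
    refine ⟨D N, hD1 N, fun n => ⟨A (max n N), ?_⟩⟩
    rw [← hN _ (le_max_right n N)]
    exact (hrep _).mono (le_max_left n N)
end

section
/- Let X ⊆ ℕ, let d ≥ 1 and v ∈ ℕ, and let α : ℕ → ℕ be a nondecreasing function such that α(n+1) ≤ α(n) + v for all n, and such that for every n, X repeats on [α(n), α(n)+n] with shift d (i.e., for every i ≤ n, α(n) + i ∈ X ↔ α(n) + d + i ∈ X). Then there exists N ∈ ℕ such that for all x ≥ N, x ∈ X if and only if x + d ∈ X; consequently X ∩ [N, ∞) is a finite union of cosets of dℕ intersected with [N, ∞). -/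
theorem eventually_periodic_from_alpha (X : Set ℕ) (d v : ℕ) (hd : 1 ≤ d)
    (α : ℕ → ℕ) (hmono : Monotone α) (hv : ∀ n : ℕ, α (n + 1) ≤ α n + v)
    (hrep : ∀ n : ℕ, RepeatsOn X (α n) d n) :
    ∃ N : ℕ, (∀ x : ℕ, N ≤ x → (x ∈ X ↔ x + d ∈ X)) ∧
      ∃ s : Finset ℕ,
        X ∩ Set.Ici N = (⋃ a ∈ s, {x : ℕ | ∃ k : ℕ, x = a + d * k}) ∩ Set.Ici N := by
  classical
  set N := α v with hN
  have key : ∀ x : ℕ, N ≤ x → (x ∈ X ↔ x + d ∈ X) := by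
    intro x hx
    obtain ⟨n, hn1, hn2⟩ : ∃ n, α n ≤ x ∧ x ≤ α n + n := by
      by_cases hall : ∀ n, α n ≤ x
      · exact ⟨x, hall x, Nat.le_add_left _ _⟩
      · push_neg at hall
        have hne : ∃ n, x < α n := hall
        set m := Nat.find hne with hm
        have hmlt : x < α m := Nat.find_spec hne
        have hvm : v < m := by
          by_contra h
          push_neg at h
          exact absurd (le_trans (hmono h) hx) (not_le.mpr hmlt)
        obtain ⟨m', heq⟩ : ∃ m', m = m' + 1 := ⟨m - 1, by omega⟩
        have h1 : ¬ x < α m' := Nat.find_min hne (by omega)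
        have h2 : α (m' + 1) ≤ α m' + v := hv m'
        have h3 : x < α (m' + 1) := heq ▸ hmlt
        exact ⟨m', by omega, by omega⟩
    have h := hrep n (x - α n) (by omega)
    have e1 : α n + (x - α n) = x := by omega
    have e2 : α n + d + (x - α n) = x + d := by omega
    rwa [e1, e2] at h
  have step : ∀ k a, N ≤ a → (a ∈ X ↔ a + d * k ∈ X) := by
    intro k
    induction k with
    | zero => simp
    | succ k ih =>
      intro a ha
      have e : a + d * (k + 1) = a + d * k + d := by ring
      rw [e, ih a ha, key (a + d * k) (by omega)]
  refine ⟨N, key, (Finset.Ico N (N + d)).filter (· ∈ X), ?_⟩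
  ext x
  simp only [Set.mem_inter_iff, Set.mem_Ici, Set.mem_iUnion, Set.mem_setOf_eq,
    Finset.mem_filter, Finset.mem_Ico]
  constructor
  · rintro ⟨hxX, hxN⟩
    have hmd := Nat.mod_add_div (x - N) d
    have hlt : (x - N) % d < d := Nat.mod_lt _ (by omega)
    refine ⟨⟨N + (x - N) % d, ⟨⟨by omega, by omega⟩, ?_⟩, (x - N) / d, by omega⟩, hxN⟩
    have := step ((x - N) / d) (N + (x - N) % d) (by omega)
    have e : N + (x - N) % d + d * ((x - N) / d) = x := by omega
    rw [e] at this
    exact this.mpr hxX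
  · rintro ⟨⟨a, ⟨⟨haN, _⟩, haX⟩, k, rfl⟩, hxN⟩
    exact ⟨(step k a haN).mp haX, hxN⟩
end
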